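/- arXiv:2312.12618 — 2 statements merged into one kernel-verified Lean document; each statement's English description precedes it below -/
import Mathlib

section
/- Let G be a finite simple connected graph, let r ∈ V(G), and let w_1, …, w_T be the weight functions of tree strategies of G rooted at r. Then π(G, r) ≤ z_{G,r} + 1, where z_{G,r} is the maximum of Σ_{v∈V(G)\{r}} C(v) over all configurations C on V(G) satisfying w_t·C ≤ w_t·1_G for every t = 1, …, T. -/
open Finset

/-- A single pebbling move on graph `G`: remove two pebbles from a vertex `u` and
place one pebble on a vertex `v` adjacent to `u`. -/
def IsPebblingMove {V : Type*} (G : SimpleGraph V) (C C' : V → ℕ) : Prop :=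
  ∃ u v, G.Adj u v ∧ 2 ≤ C u ∧
    C' u = C u - 2 ∧ C' v = C v + 1 ∧ ∀ w, w ≠ u → w ≠ v → C' w = C w

/-- A configuration `C` is `r`-solvable if some sequence of pebbling moves starting
from `C` places at least one pebble on `r`. -/
def Solvable {V : Type*} (G : SimpleGraph V) (r : V) (C : V → ℕ) : Prop :=
  ∃ C', Relation.ReflTransGen (IsPebblingMove G) C C' ∧ 1 ≤ C' r

/-- The rooted pebbling number `π(G, r)`: the smallest `k` such that every
configuration of size `k` is `r`-solvable. -/
noncomputable def pebblingNumber {V : Type*} [Fintype V] (G : SimpleGraph V) (r : V) : ℕ :=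
  sInf {k : ℕ | ∀ C : V → ℕ, (∑ v, C v) = k → Solvable G r C}

/-- A tree strategy of `G` rooted at `r`: a subtree of `G` containing `r` (encoded by its
vertex set and parent map) together with an associated nonnegative weight function. -/
structure TreeStrategy {V : Type*} (G : SimpleGraph V) (r : V) where
  /-- the vertices of the subtree -/
  verts : Set V
  /-- the parent map of the subtree (towards the root) -/
  parent : V → V
  root_mem : r ∈ verts
  parent_mem : ∀ v ∈ verts, v ≠ r → parent v ∈ verts
  parent_adj : ∀ v ∈ verts, v ≠ r → G.Adj (parent v) v
  reaches_root : ∀ v ∈ verts, ∃ n : ℕ, parent^[n] v = r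
  /-- the weight function -/
  weight : V → ℝ
  weight_nonneg : ∀ v, 0 ≤ weight v
  weight_root : weight r = 0
  weight_parent : ∀ v ∈ verts, v ≠ r → ¬ G.Adj v r → 2 * weight v ≤ weight (parent v)
  weight_zero : ∀ v ∉ verts, weight v = 0

/-!
A tree strategy turns the weight function into a potential that pebbling moves toward the root
cannot increase: a move from `v` to its parent `v⁺` changes `w·C` by `w(v⁺) - 2 w(v) ≥ 0`. So if
`C` is `r`-unsolvable, keep moving two pebbles from any non-root tree vertex holding at least two
toward the root (such a vertex is not adjacent to `r`, or `C` would be solvable). This terminates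
in an unsolvable configuration with at most one pebble on each tree vertex other than `r`, whose
potential is at most `w·1_G`. Hence every unsolvable `C` satisfies all constraints `w_t·C ≤ w_t·1_G`,
has no pebble on `r`, and so has size at most `z`.
-/

section

variable {V : Type*} {G : SimpleGraph V} {r : V}

theorem Solvable.of_one_le {C : V → ℕ} (h : 1 ≤ C r) : Solvable G r C :=
  ⟨C, .refl, h⟩

theorem IsPebblingMove.solvable {C C' : V → ℕ} (hmove : IsPebblingMove G C C')
    (h : Solvable G r C') : Solvable G r C :=
  let ⟨C'', hreach, hr⟩ := h
  ⟨C'', hreach.head hmove, hr⟩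

section pebblingMove

variable [DecidableEq V]

def pebblingMove (C : V → ℕ) (u v : V) : V → ℕ :=
  Function.update (Function.update C u (C u - 2)) v (C v + 1)

@[simp]
theorem pebblingMove_apply_target (C : V → ℕ) (u v : V) : pebblingMove C u v v = C v + 1 :=
  Function.update_self ..

theorem isPebblingMove_pebblingMove {C : V → ℕ} {u v : V} (hadj : G.Adj u v) (hu : 2 ≤ C u) :
    IsPebblingMove G C (pebblingMove C u v) := by
  refine ⟨u, v, hadj, hu, ?_, pebblingMove_apply_target C u v, fun w hwu hwv => ?_⟩
  · simp [pebblingMove, Function.update_of_ne hadj.ne]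
  · simp [pebblingMove, hwu, hwv]

theorem pebblingMove_add_single {C : V → ℕ} {u v : V} (huv : u ≠ v) (hu : 2 ≤ C u) :
    pebblingMove C u v + Pi.single u 2 = C + Pi.single v 1 := by
  ext x
  by_cases hxu : x = u <;> by_cases hxv : x = v <;> simp_all [pebblingMove]

theorem sum_mul_pebblingMove [Fintype V] {R : Type*} [CommSemiring R] (f : V → R)
    {C : V → ℕ} {u v : V} (huv : u ≠ v) (hu : 2 ≤ C u) :
    ∑ x, f x * (pebblingMove C u v x : R) + 2 * f u = ∑ x, f x * (C x : R) + f v := by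
  have key := congrArg (fun D : V → ℕ => ∑ x, f x * (D x : R)) (pebblingMove_add_single huv hu)
  simpa [mul_add, Finset.sum_add_distrib, Pi.single_apply, mul_comm] using key

theorem sum_pebblingMove [Fintype V] {C : V → ℕ} {u v : V} (huv : u ≠ v) (hu : 2 ≤ C u) :
    ∑ x, pebblingMove C u v x + 1 = ∑ x, C x := by
  have := sum_mul_pebblingMove (R := ℕ) 1 huv hu
  simp only [Pi.one_apply, one_mul, Nat.cast_id] at this
  omega

end pebblingMove

namespace TreeStrategy

variable [Fintype V] (s : TreeStrategy G r)

theorem weight_dot_le_of_forall_le_one {C : V → ℕ} (hC : ∀ v ∈ s.verts, v ≠ r → C v ≤ 1) :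
    ∑ v, s.weight v * (C v : ℝ) ≤ ∑ v, s.weight v := by
  refine Finset.sum_le_sum fun v _ => ?_
  by_cases hv : v ∈ s.verts
  · by_cases hvr : v = r
    · simp [hvr, s.weight_root]
    · exact mul_le_of_le_one_right (s.weight_nonneg v) (by exact_mod_cast hC v hv hvr)
  · simp [s.weight_zero v hv]

theorem weight_dot_le_of_not_solvable [DecidableEq V] (C : V → ℕ) (hC : ¬ Solvable G r C) :
    ∑ v, s.weight v * (C v : ℝ) ≤ ∑ v, s.weight v := by
  by_cases hsmall : ∀ v ∈ s.verts, v ≠ r → C v ≤ 1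
  · exact s.weight_dot_le_of_forall_le_one hsmall
  push Not at hsmall
  obtain ⟨v, hv, hvr, hCv⟩ := hsmall
  have hnadj : ¬ G.Adj v r := fun hadj =>
    hC <| (isPebblingMove_pebblingMove hadj hCv).solvable (.of_one_le (by simp))
  have hadj : G.Adj v (s.parent v) := (s.parent_adj v hv hvr).symm
  have hmove := isPebblingMove_pebblingMove hadj hCv
  have hstep := sum_mul_pebblingMove s.weight hadj.ne hCv
  have hdecr : ∑ x, pebblingMove C v (s.parent v) x < ∑ x, C x := by
    have := sum_pebblingMove hadj.ne hCv
    omega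
  have ih := weight_dot_le_of_not_solvable (pebblingMove C v (s.parent v))
    fun h => hC (hmove.solvable h)
  linarith [s.weight_parent v hv hvr hnadj]
termination_by ∑ x, C x

end TreeStrategy

end

theorem pebbling_le_lp_optimum_general {V : Type*} [Fintype V] [DecidableEq V]
    (G : SimpleGraph V) (r : V) (T : ℕ)
    (S : Fin T → TreeStrategy G r) (z : ℕ)
    (hz : IsGreatest {k : ℕ | ∃ C : V → ℕ,
        (∀ t : Fin T, ∑ v, (S t).weight v * (C v : ℝ) ≤ ∑ v, (S t).weight v) ∧
        k = ∑ v ∈ Finset.univ.erase r, C v} z) :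
    pebblingNumber G r ≤ z + 1 := by
  refine Nat.sInf_le fun C hsize => by_contra fun hC => ?_
  have hroot : C r = 0 := by
    by_contra h
    exact hC (.of_one_le (Nat.one_le_iff_ne_zero.mpr h))
  have hle : ∑ v ∈ Finset.univ.erase r, C v ≤ z :=
    hz.2 ⟨C, fun t => (S t).weight_dot_le_of_not_solvable C hC, rfl⟩
  have hsplit := Finset.add_sum_erase Finset.univ C (Finset.mem_univ r)
  omega

/-- If `w_1, …, w_T` are weight functions of tree strategies of `G` rooted at `r`, then
`π(G, r) ≤ z + 1`, where `z` is the maximum of `Σ_{v ≠ r} C(v)` over all configurations `C`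
satisfying `w_t·C ≤ w_t·1_G` for every `t`. -/
theorem pebbling_le_lp_optimum {V : Type*} [Fintype V] [DecidableEq V]
    (G : SimpleGraph V) (hG : G.Connected) (r : V) (T : ℕ)
    (S : Fin T → TreeStrategy G r) (z : ℕ)
    (hz : IsGreatest {k : ℕ | ∃ C : V → ℕ,
        (∀ t : Fin T, ∑ v, (S t).weight v * (C v : ℝ) ≤ ∑ v, (S t).weight v) ∧
        k = ∑ v ∈ Finset.univ.erase r, C v} z) :
    pebblingNumber G r ≤ z + 1 :=
  pebbling_le_lp_optimum_general G r T S z hz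
end

section
/- Let G be a finite simple connected graph rooted at r ∈ V(G), and let w_1, …, w_T be weight functions of tree strategies of G rooted at r such that Σ_{t=1}^T w_t(v) ≥ T for every vertex v ∈ V(G)\{r}. Then π(G, r) ≤ ⌊ẑ/T⌋ + 1, where ẑ = Σ_{t=1}^T Σ_{v∈V(G)\{r}} w_t(v). -/
open Finset

/-!
Weight-function argument. Fix a tree strategy with weight `w` and an `r`-unsolvable
configuration `C`. As long as some non-root tree vertex `u` holds two pebbles, `u` is not
adjacent to `r` (else `C` would be solvable), and moving a pebble from `u` to its parent
gives a smaller unsolvable configuration whose weight `Σ w(v) C(v)` has not decreased,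
since `w(u⁺) ≥ 2 w(u)`. Once every non-root tree vertex holds at most one pebble the weight
is at most `Σ_{v ≠ r} w(v)`. Summing this over the strategies and using the coverage
hypothesis gives `T · |C| ≤ ẑ` for every unsolvable `C`, so `⌊ẑ/T⌋ + 1` pebbles suffice.
-/

section Pebbling

variable {V : Type*} {G : SimpleGraph V} {r : V}

section Moves

variable [DecidableEq V]

def moveConfig (C : V → ℕ) (u v : V) : V → ℕ :=
  Function.update (Function.update C u (C u - 2)) v (C v + 1)

lemma isPebblingMove_moveConfig {C : V → ℕ} {u v : V} (huv : G.Adj u v) (hu : 2 ≤ C u) :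
    IsPebblingMove G C (moveConfig C u v) := by
  refine ⟨u, v, huv, hu, ?_, by simp [moveConfig], fun w hwu hwv => ?_⟩
  · simp [moveConfig, Function.update_of_ne huv.ne]
  · simp [moveConfig, Function.update_of_ne hwu, Function.update_of_ne hwv]

lemma cast_moveConfig_apply {C : V → ℕ} {u v : V} (huv : u ≠ v) (hu : 2 ≤ C u) (w : V) :
    (moveConfig C u v w : ℝ) =
      C w - 2 * (Pi.single u 1 : V → ℝ) w + (Pi.single v 1 : V → ℝ) w := by
  by_cases hwv : w = v
  · subst hwv
    simp [moveConfig, huv.symm]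
  by_cases hwu : w = u
  · subst hwu
    simp [moveConfig, huv, Nat.cast_sub hu]
  · simp [moveConfig, hwu, hwv]

variable [Fintype V]

lemma sum_mul_moveConfig {C : V → ℕ} {u v : V} (huv : u ≠ v) (hu : 2 ≤ C u) (f : V → ℝ) :
    ∑ w, f w * moveConfig C u v w = ∑ w, f w * C w - 2 * f u + f v := by
  simp only [cast_moveConfig_apply huv hu, Pi.single_apply, mul_ite, mul_one, mul_zero, mul_add,
    mul_sub, sum_add_distrib, sum_sub_distrib, sum_ite_eq', mem_univ, ↓reduceIte]
  ring

lemma sum_moveConfig_add_one {C : V → ℕ} {u v : V} (huv : u ≠ v) (hu : 2 ≤ C u) :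
    ∑ w, moveConfig C u v w + 1 = ∑ w, C w := by
  have h := sum_mul_moveConfig huv hu 1
  simp only [Pi.one_apply, one_mul] at h
  exact_mod_cast (by linarith : (∑ w, (moveConfig C u v w : ℝ)) + 1 = ∑ w, (C w : ℝ))

end Moves

lemma Solvable.of_isPebblingMove {C C' : V → ℕ} (h : IsPebblingMove G C C')
    (hs : Solvable G r C') : Solvable G r C :=
  let ⟨D, hD, hr⟩ := hs
  ⟨D, .head h hD, hr⟩

lemma solvable_of_pos_root {C : V → ℕ} (hr : 1 ≤ C r) : Solvable G r C :=
  ⟨C, .refl, hr⟩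

lemma root_eq_zero_of_not_solvable {C : V → ℕ} (hC : ¬ Solvable G r C) : C r = 0 := by
  by_contra h
  exact hC (solvable_of_pos_root (Nat.one_le_iff_ne_zero.mpr h))

lemma solvable_of_adj_root [DecidableEq V] {C : V → ℕ} {u : V} (hur : G.Adj u r)
    (hu : 2 ≤ C u) : Solvable G r C :=
  (solvable_of_pos_root (by simp [moveConfig])).of_isPebblingMove
    (isPebblingMove_moveConfig hur hu)

namespace TreeStrategy

variable [Fintype V] [DecidableEq V] (S : TreeStrategy G r)

lemma sum_weight_mul_le_of_le_one {C : V → ℕ} (hC : ∀ v ∈ S.verts, v ≠ r → C v ≤ 1) :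
    ∑ v, S.weight v * C v ≤ ∑ v ∈ univ.erase r, S.weight v := by
  rw [← add_sum_erase _ _ (mem_univ r), S.weight_root, zero_mul, zero_add]
  refine sum_le_sum fun v hv => ?_
  have hvr := ne_of_mem_erase hv
  by_cases hvS : v ∈ S.verts
  · exact mul_le_of_le_one_right (S.weight_nonneg v) (by exact_mod_cast hC v hvS hvr)
  · simp [S.weight_zero v hvS]

lemma sum_weight_mul_le_moveConfig_parent {C : V → ℕ} {u : V} (hu : u ∈ S.verts)
    (hur : u ≠ r) (hC : 2 ≤ C u) (hadj : ¬ G.Adj u r) :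
    ∑ v, S.weight v * C v ≤ ∑ v, S.weight v * moveConfig C u (S.parent u) v := by
  rw [sum_mul_moveConfig (S.parent_adj u hu hur).ne.symm hC]
  linarith [S.weight_parent u hu hur hadj]

theorem sum_weight_mul_le_of_not_solvable {C : V → ℕ} (hC : ¬ Solvable G r C) :
    ∑ v, S.weight v * C v ≤ ∑ v ∈ univ.erase r, S.weight v := by
  induction hn : ∑ v, C v using Nat.strong_induction_on generalizing C with
  | _ n ih =>
  by_cases hex : ∃ u ∈ S.verts, u ≠ r ∧ 2 ≤ C u
  · obtain ⟨u, hu, hur, hCu⟩ := hex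
    have hadj : ¬ G.Adj u r := fun h => hC (solvable_of_adj_root h hCu)
    have hmove := isPebblingMove_moveConfig (S.parent_adj u hu hur).symm hCu
    have hsize := sum_moveConfig_add_one (S.parent_adj u hu hur).ne.symm hCu
    exact (S.sum_weight_mul_le_moveConfig_parent hu hur hCu hadj).trans
      (ih _ (by omega) (fun hs => hC (hs.of_isPebblingMove hmove)) rfl)
  · push Not at hex
    exact S.sum_weight_mul_le_of_le_one fun v hv hvr => by have := hex v hv hvr; omega

end TreeStrategy

lemma mul_size_le_sum_weight_of_not_solvable [Fintype V] [DecidableEq V] {ι : Type*}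
    [Fintype ι] (S : ι → TreeStrategy G r) {a : ℝ}
    (hcov : ∀ v, v ≠ r → a ≤ ∑ i, (S i).weight v) {C : V → ℕ} (hC : ¬ Solvable G r C) :
    a * ∑ v, (C v : ℝ) ≤ ∑ i, ∑ v ∈ univ.erase r, (S i).weight v := by
  have hr := root_eq_zero_of_not_solvable hC
  calc a * ∑ v, (C v : ℝ) = ∑ v ∈ univ.erase r, a * C v := by
        rw [← add_sum_erase _ _ (mem_univ r), hr, Nat.cast_zero, zero_add, mul_sum]
    _ ≤ ∑ v ∈ univ.erase r, (∑ i, (S i).weight v) * C v :=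
        sum_le_sum fun v hv => by gcongr; exact hcov v (ne_of_mem_erase hv)
    _ ≤ ∑ v, (∑ i, (S i).weight v) * C v :=
        sum_le_sum_of_subset_of_nonneg (subset_univ _) fun v _ _ =>
          mul_nonneg (sum_nonneg fun i _ => (S i).weight_nonneg v) (Nat.cast_nonneg _)
    _ = ∑ i, ∑ v, (S i).weight v * C v := by
        simp only [sum_mul]
        exact sum_comm
    _ ≤ ∑ i, ∑ v ∈ univ.erase r, (S i).weight v :=
        sum_le_sum fun i _ => (S i).sum_weight_mul_le_of_not_solvable hC

end Pebbling

theorem pebbling_le_floor_avg_weight_general {V : Type*} [Fintype V] [DecidableEq V]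
    (G : SimpleGraph V) (r : V)
    (T : ℕ) (hT : 0 < T) (S : Fin T → TreeStrategy G r)
    (hcov : ∀ v, v ≠ r → (T : ℝ) ≤ ∑ t : Fin T, (S t).weight v) :
    pebblingNumber G r ≤
      ⌊(∑ t : Fin T, ∑ v ∈ Finset.univ.erase r, (S t).weight v) / (T : ℝ)⌋₊ + 1 := by
  set z := ∑ t : Fin T, ∑ v ∈ Finset.univ.erase r, (S t).weight v
  refine Nat.sInf_le fun C hC => ?_
  by_contra hns
  have hTpos : (0 : ℝ) < T := by exact_mod_cast hT
  have hle : (T : ℝ) * (⌊z / T⌋₊ + 1 : ℕ) ≤ z := by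
    rw [← hC]
    exact_mod_cast mul_size_le_sum_weight_of_not_solvable S hcov hns
  have hlt : z / T < (⌊z / T⌋₊ + 1 : ℕ) := by exact_mod_cast Nat.lt_floor_add_one (z / T)
  rw [div_lt_iff₀ hTpos] at hlt
  linarith

/-- If `w_1, …, w_T` are weight functions of tree strategies of `G` rooted at `r` with
`Σ_t w_t(v) ≥ T` for every `v ≠ r`, then `π(G, r) ≤ ⌊ẑ/T⌋ + 1` where
`ẑ = Σ_t Σ_{v ≠ r} w_t(v)`. -/
theorem pebbling_le_floor_avg_weight {V : Type*} [Fintype V] [DecidableEq V]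
    (G : SimpleGraph V) (hG : G.Connected) (r : V)
    (T : ℕ) (hT : 0 < T) (S : Fin T → TreeStrategy G r)
    (hcov : ∀ v, v ≠ r → (T : ℝ) ≤ ∑ t : Fin T, (S t).weight v) :
    pebblingNumber G r ≤
      ⌊(∑ t : Fin T, ∑ v ∈ Finset.univ.erase r, (S t).weight v) / (T : ℝ)⌋₊ + 1 :=
  pebbling_le_floor_avg_weight_general G r T hT S hcov
end
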